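/- Let f be a rational map of degree d ≥ 2 on the Riemann sphere and μ_f its measure of maximal entropy (the Brolin–Lyubich measure). Then for every φ ∈ L¹(μ_f), lim_{n→∞} (1/n) Σ_{j=0}^{n−1} (1/d^j) Σ'_{y ∈ f^{−j}(x)} φ(y) = ∫ φ dμ_f for μ_f-almost every x, where the inner sum runs over preimages counted with multiplicity. -/

import Mathlib

open MeasureTheory Filter Topology

/-- Transfer operator `Uφ(x) = (1/d) Σ'_{y ∈ T(x)} φ(y)` of a `d`-valued
correspondence `T`, with the sum counted with multiplicity. -/
noncomputable def transfer {X E : Type*} [AddCommMonoid E] [Module ℝ E]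
    (d : ℕ) (T : X → Multiset X) (φ : X → E) : X → E :=
  fun x => (d : ℝ)⁻¹ • ((T x).map φ).sum

/-- Measurability of the correspondence `T`, expressed via its transfer operator. -/
def MeasCorr {X : Type*} [MeasurableSpace X] (d : ℕ) (T : X → Multiset X) : Prop :=
  ∀ φ : X → ℝ, Measurable φ → Measurable (transfer d T φ)

/-- `B` is almost invariant with respect to `T` and `μ`: there is a Borel subset
`B' ⊆ B` of full measure in `B` with `T(x) ⊆ B` for all `x ∈ B'`. -/
def AlmostInvariant {X : Type*} [MeasurableSpace X] (μ : Measure X)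
    (T : X → Multiset X) (B : Set X) : Prop :=
  ∃ B' : Set X, MeasurableSet B' ∧ B' ⊆ B ∧ (∀ x ∈ B', ∀ y ∈ T x, y ∈ B) ∧ μ B' = μ B

/-- `μ` is invariant for the transfer operator: `∫ Uφ dμ = ∫ φ dμ` for every
integrable `φ`. -/
def UInvariant {X : Type*} [MeasurableSpace X] (μ : Measure X)
    (d : ℕ) (T : X → Multiset X) : Prop :=
  ∀ φ : X → ℝ, Integrable φ μ →
    Integrable (transfer d T φ) μ ∧ ∫ x, transfer d T φ x ∂μ = ∫ x, φ x ∂μ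

/-- `μ` is ergodic: every almost invariant Borel set has measure `0` or `1`. -/
def ErgodicCorr {X : Type*} [MeasurableSpace X] (μ : Measure X)
    (T : X → Multiset X) : Prop :=
  ∀ B : Set X, MeasurableSet B → AlmostInvariant μ T B → μ B = 0 ∨ μ B = 1


section Transfer
variable {X : Type*} {d : ℕ} {T : X → Multiset X}

lemma transfer_mono {φ ψ : X → ℝ} (h : ∀ x, φ x ≤ ψ x) (x : X) :
    transfer d T φ x ≤ transfer d T ψ x := by
  simp only [transfer, smul_eq_mul]
  exact mul_le_mul_of_nonneg_left
    (Multiset.sum_map_le_sum_map φ ψ (fun y _ => h y)) (by positivity)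

lemma transfer_const (hcard : ∀ x, Multiset.card (T x) = d) (hd : d ≠ 0) (c : ℝ) :
    transfer d T (fun _ => c) = fun _ => c := by
  funext x
  simp only [transfer, Multiset.map_const', Multiset.sum_replicate, hcard x,
    nsmul_eq_mul, smul_eq_mul]
  field_simp

lemma transfer_sub (φ ψ : X → ℝ) :
    transfer d T (fun y => φ y - ψ y) = fun x => transfer d T φ x - transfer d T ψ x := by
  funext x
  simp only [transfer, smul_eq_mul]
  rw [Multiset.sum_map_sub]
  ring

lemma transfer_add (φ ψ : X → ℝ) :
    transfer d T (fun y => φ y + ψ y) = fun x => transfer d T φ x + transfer d T ψ x := by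
  funext x
  simp only [transfer, smul_eq_mul]
  rw [Multiset.sum_map_add]
  ring

lemma transfer_abs_le (φ : X → ℝ) (x : X) :
    |transfer d T φ x| ≤ transfer d T (fun y => |φ y|) x := by
  simp only [transfer, smul_eq_mul, abs_mul, abs_inv, Nat.abs_cast]
  refine mul_le_mul_of_nonneg_left ?_ (by positivity)
  simpa [Multiset.map_map] using Multiset.abs_sum_le_sum_abs (s := (T x).map φ)

lemma transfer_iter_mono {φ ψ : X → ℝ} (h : ∀ x, φ x ≤ ψ x) (j : ℕ) (x : X) :
    (transfer d T)^[j] φ x ≤ (transfer d T)^[j] ψ x := by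
  induction j generalizing φ ψ h with
  | zero => exact h x
  | succ n ih =>
    rw [Function.iterate_succ_apply, Function.iterate_succ_apply]
    exact ih (transfer_mono h)

lemma transfer_iter_const (hcard : ∀ x, Multiset.card (T x) = d) (hd : d ≠ 0) (c : ℝ) (j : ℕ) :
    (transfer d T)^[j] (fun _ => c) = fun _ => c := by
  induction j with
  | zero => rfl
  | succ n ih => rw [Function.iterate_succ_apply, transfer_const hcard hd, ih]

lemma transfer_iter_sub (φ ψ : X → ℝ) (j : ℕ) :
    (transfer d T)^[j] (fun y => φ y - ψ y)
      = fun x => (transfer d T)^[j] φ x - (transfer d T)^[j] ψ x := by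
  induction j generalizing φ ψ with
  | zero => rfl
  | succ n ih =>
    rw [Function.iterate_succ_apply, transfer_sub, ih, Function.iterate_succ_apply,
      Function.iterate_succ_apply]

lemma transfer_iter_add (φ ψ : X → ℝ) (j : ℕ) :
    (transfer d T)^[j] (fun y => φ y + ψ y)
      = fun x => (transfer d T)^[j] φ x + (transfer d T)^[j] ψ x := by
  induction j generalizing φ ψ with
  | zero => rfl
  | succ n ih =>
    rw [Function.iterate_succ_apply, transfer_add, ih, Function.iterate_succ_apply,
      Function.iterate_succ_apply]

lemma transfer_iter_abs_le (φ : X → ℝ) (j : ℕ) (x : X) :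
    |(transfer d T)^[j] φ x| ≤ (transfer d T)^[j] (fun y => |φ y|) x := by
  induction j generalizing φ with
  | zero => exact le_refl _
  | succ n ih =>
    rw [Function.iterate_succ_apply, Function.iterate_succ_apply]
    exact le_trans (ih _) (transfer_iter_mono (transfer_abs_le φ) n x)

lemma transfer_iter_nonneg (hcard : ∀ x, Multiset.card (T x) = d) (hd : d ≠ 0)
    {φ : X → ℝ} (h : ∀ x, 0 ≤ φ x) (j : ℕ) (x : X) :
    0 ≤ (transfer d T)^[j] φ x := by
  have := transfer_iter_mono (d := d) (T := T) (φ := fun _ => (0:ℝ)) (ψ := φ) h j x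
  rwa [transfer_iter_const hcard hd 0 j] at this

variable [MeasurableSpace X]

lemma transfer_iter_meas (hT : MeasCorr d T) {φ : X → ℝ} (hm : Measurable φ) (j : ℕ) :
    Measurable ((transfer d T)^[j] φ) := by
  induction j generalizing φ hm with
  | zero => exact hm
  | succ n ih => rw [Function.iterate_succ_apply]; exact ih (hT φ hm)

lemma transfer_iter_int {μ : Measure X} (hbal : UInvariant μ d T) {φ : X → ℝ}
    (hint : Integrable φ μ) (j : ℕ) :
    Integrable ((transfer d T)^[j] φ) μ ∧
      ∫ x, (transfer d T)^[j] φ x ∂μ = ∫ x, φ x ∂μ := by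
  induction j generalizing φ hint with
  | zero => exact ⟨hint, rfl⟩
  | succ n ih =>
    rw [Function.iterate_succ_apply]
    obtain ⟨h1, h2⟩ := ih (hbal φ hint).1
    exact ⟨h1, h2.trans (hbal φ hint).2⟩

end Transfer

section Hopf
variable {X : Type*} [MeasurableSpace X] {d : ℕ} {T : X → Multiset X}

/-- Birkhoff sums for the transfer operator. -/
noncomputable def bS (d : ℕ) (T : X → Multiset X) (φ : X → ℝ) (n : ℕ) : X → ℝ :=
  fun x => ∑ j ∈ Finset.range n, (transfer d T)^[j] φ x

lemma bS_succ (φ : X → ℝ) (n : ℕ) :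
    bS d T φ (n + 1) = fun x => φ x + transfer d T (bS d T φ n) x := by
  induction n with
  | zero =>
    funext x
    simp [bS, transfer]
    right; rw [show bS d T φ 0 = fun _ => 0 from funext fun y => by simp [bS]]; simp
  | succ n ih =>
    have h1 : bS d T φ (n + 2) = fun x => bS d T φ (n+1) x + (transfer d T)^[n+1] φ x := by
      funext y; simp [bS, Finset.sum_range_succ]
    have h2 : bS d T φ (n + 1) = fun x => bS d T φ n x + (transfer d T)^[n] φ x := by
      funext y; simp [bS, Finset.sum_range_succ]
    have h3 : transfer d T (bS d T φ (n+1)) = fun x =>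
        transfer d T (bS d T φ n) x + transfer d T ((transfer d T)^[n] φ) x := by
      rw [h2]; exact transfer_add _ _
    funext x
    rw [congrFun h1 x, congrFun ih x, congrFun h3 x, Function.iterate_succ_apply']
    ring

/-- The running maximum of Birkhoff sums (includes the `0`-th sum `0`). -/
noncomputable def bM (d : ℕ) (T : X → Multiset X) (φ : X → ℝ) (N : ℕ) : X → ℝ :=
  fun x => (Finset.range (N + 1)).sup' Finset.nonempty_range_add_one (fun n => bS d T φ n x)

lemma bS_le_bM (φ : X → ℝ) {n N : ℕ} (h : n ≤ N) (x : X) : bS d T φ n x ≤ bM d T φ N x := by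
  unfold bM
  exact Finset.le_sup' (f := fun n => bS d T φ n x)
    (Finset.mem_range.2 (Nat.lt_succ_of_le h))

lemma bM_nonneg (φ : X → ℝ) (N : ℕ) (x : X) : 0 ≤ bM d T φ N x := by
  have h := bS_le_bM (d := d) (T := T) φ (Nat.zero_le N) x
  simpa [bS] using h

lemma bM_mono (φ : X → ℝ) {N N' : ℕ} (h : N ≤ N') (x : X) :
    bM d T φ N x ≤ bM d T φ N' x := by
  unfold bM
  apply Finset.sup'_le
  intro n hn
  exact bS_le_bM φ (le_trans (Nat.lt_succ_iff.1 (Finset.mem_range.1 hn)) h) x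

lemma bM_exists (φ : X → ℝ) (N : ℕ) (x : X) :
    ∃ n ≤ N, bM d T φ N x = bS d T φ n x := by
  obtain ⟨n, hn, he⟩ := Finset.exists_mem_eq_sup' (Finset.nonempty_range_add_one (n := N))
    (fun n => bS d T φ n x)
  exact ⟨n, Nat.lt_succ_iff.1 (Finset.mem_range.1 hn), he⟩

lemma bM_succ (φ : X → ℝ) (N : ℕ) (x : X) :
    bM d T φ (N + 1) x = max (bM d T φ N x) (bS d T φ (N + 1) x) := by
  apply le_antisymm
  · unfold bM
    apply Finset.sup'_le
    intro n hn
    rcases Nat.lt_succ_iff_lt_or_eq.1 (Finset.mem_range.1 hn) with h | rfl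
    · exact le_max_of_le_left (bS_le_bM φ (Nat.lt_succ_iff.1 h) x)
    · exact le_max_right _ _
  · exact max_le (bM_mono φ (Nat.le_succ N) x) (bS_le_bM φ le_rfl x)

lemma bM_meas (hT : MeasCorr d T) {φ : X → ℝ} (hm : Measurable φ) (N : ℕ) :
    Measurable (bM d T φ N) := by
  have hS : ∀ n, Measurable (bS d T φ n) := fun n =>
    Finset.measurable_sum _ (fun j _ => transfer_iter_meas hT hm j)
  have : bM d T φ N = (Finset.range (N+1)).sup' Finset.nonempty_range_add_one (bS d T φ) := by
    funext x; simp [bM, Finset.sup'_apply]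
  rw [this]
  exact Finset.measurable_range_sup' (fun k _ => hS k)

lemma bM_int {μ : Measure X} (hbal : UInvariant μ d T)
    {φ : X → ℝ} (hint : Integrable φ μ) (N : ℕ) :
    Integrable (bM d T φ N) μ := by
  have hSint : ∀ n, Integrable (bS d T φ n) μ := fun n =>
    MeasureTheory.integrable_finset_sum _ (fun j _ => (transfer_iter_int hbal hint j).1)
  induction N with
  | zero =>
    have : bM d T φ 0 = bS d T φ 0 := by
      funext x; simp [bM]
    rw [this]; exact hSint 0
  | succ n ih =>
    have : bM d T φ (n+1) = fun x => max (bM d T φ n x) (bS d T φ (n+1) x) := by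
      funext x; exact bM_succ φ n x
    rw [this]
    exact ih.sup (hSint (n+1))

end Hopf

section Maximal
variable {X : Type*} [MeasurableSpace X] {d : ℕ} {T : X → Multiset X}

lemma hopf_ineq (μ : Measure X) [IsFiniteMeasure μ]
    (hcard : ∀ x, Multiset.card (T x) = d) (hd : d ≠ 0)
    (hT : MeasCorr d T) (hbal : UInvariant μ d T)
    {φ : X → ℝ} (hm : Measurable φ) (hint : Integrable φ μ) (N : ℕ) :
    0 ≤ ∫ x, Set.indicator {y | 0 < bM d T φ N y} φ x ∂μ := by
  set M := bM d T φ N with hM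
  set B := {y | 0 < M y} with hBdef
  have hBm : MeasurableSet B := measurableSet_lt measurable_const (bM_meas hT hm N)
  have hMint : Integrable M μ := bM_int hbal hint N
  have hUM := hbal M hMint
  have hUMnonneg : ∀ x, 0 ≤ transfer d T M x := by
    intro x
    have h0 : transfer d T (fun _ => (0:ℝ)) x ≤ transfer d T M x :=
      transfer_mono (fun y => bM_nonneg φ N y) x
    rwa [transfer_const hcard hd 0] at h0
  have key : ∀ x, M x - transfer d T M x ≤ Set.indicator B φ x := by
    intro x
    by_cases hx : x ∈ B
    · rw [Set.indicator_of_mem hx]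
      obtain ⟨n, hnN, hn⟩ := bM_exists φ N x
      rcases n with _ | m
      · exfalso
        have h0 : M x = 0 := by simpa [bS] using hn
        have := hx
        rw [hBdef] at this
        simp only [Set.mem_setOf_eq, h0] at this
        exact lt_irrefl 0 this
      · have h1 : M x = φ x + transfer d T (bS d T φ m) x := by
          rw [← hM] at hn
          rw [hn, congrFun (bS_succ φ m) x]
        have h2 : transfer d T (bS d T φ m) x ≤ transfer d T M x :=
          transfer_mono (fun y => bS_le_bM φ (le_trans (Nat.le_succ m) hnN) y) x
        linarith
    · rw [Set.indicator_of_notMem hx]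
      have hMx : M x = 0 := le_antisymm (not_lt.1 (fun h => hx h)) (bM_nonneg φ N x)
      have := hUMnonneg x
      linarith
  have hInd : Integrable (Set.indicator B φ) μ := hint.indicator hBm
  have hle := integral_mono (hMint.sub hUM.1) hInd (fun x => key x)
  have heq : ∫ x, (M - transfer d T M) x ∂μ = 0 := by
    simp only [Pi.sub_apply]
    rw [integral_sub hMint hUM.1, hUM.2, sub_self]
  calc (0:ℝ) = ∫ x, (M - transfer d T M) x ∂μ := heq.symm
    _ ≤ ∫ x, Set.indicator B φ x ∂μ := hle

lemma maximal_ineq (μ : Measure X) [IsFiniteMeasure μ]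
    (hcard : ∀ x, Multiset.card (T x) = d) (hd : d ≠ 0)
    (hT : MeasCorr d T) (hbal : UInvariant μ d T)
    {g : X → ℝ} (hm : Measurable g) (hint : Integrable g μ) (hg0 : ∀ x, 0 ≤ g x)
    {c : ℝ} (hc : 0 < c) :
    μ {x | ∃ n : ℕ, 0 < n ∧ c * n < ∑ j ∈ Finset.range n, (transfer d T)^[j] g x}
      ≤ ENNReal.ofReal (c⁻¹ * ∫ x, g x ∂μ) := by
  set φ : X → ℝ := fun x => g x - c with hφ
  have hφm : Measurable φ := hm.sub measurable_const
  have hφint : Integrable φ μ := hint.sub (integrable_const c)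
  have hiter : ∀ j, (transfer d T)^[j] φ = fun x => (transfer d T)^[j] g x - c := by
    intro j
    have h1 := transfer_iter_sub (d := d) (T := T) g (fun _ => c) j
    rw [hφ, h1, transfer_iter_const hcard hd c j]
  have hSrel : ∀ n x, bS d T φ n x
      = (∑ j ∈ Finset.range n, (transfer d T)^[j] g x) - n * c := by
    intro n x
    unfold bS
    rw [show (fun j => (transfer d T)^[j] φ x) = fun j => (transfer d T)^[j] g x - c by
      funext j; rw [hiter j]]
    rw [Finset.sum_sub_distrib, Finset.sum_const, Finset.card_range, nsmul_eq_mul]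
  set B : ℕ → Set X := fun N => {x | 0 < bM d T φ N x} with hB
  have hBm : ∀ N, MeasurableSet (B N) := fun N =>
    measurableSet_lt measurable_const (bM_meas hT hφm N)
  have hmono : Monotone B := by
    intro N N' h x hx
    exact lt_of_lt_of_le hx (bM_mono φ h x)
  have hAeq : {x | ∃ n : ℕ, 0 < n ∧ c * n < ∑ j ∈ Finset.range n, (transfer d T)^[j] g x}
      = ⋃ N, B N := by
    ext x
    simp only [Set.mem_setOf_eq, Set.mem_iUnion]
    constructor
    · rintro ⟨n, hn, hlt⟩
      refine ⟨n, ?_⟩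
      have : 0 < bS d T φ n x := by rw [hSrel]; nlinarith [hlt]
      exact lt_of_lt_of_le this (bS_le_bM φ le_rfl x)
    · rintro ⟨N, hx⟩
      obtain ⟨n, hnN, heq⟩ := bM_exists φ N x
      have hpos : 0 < bS d T φ n x := heq ▸ hx
      have hn0 : 0 < n := by
        rcases Nat.eq_zero_or_pos n with rfl | h
        · simp [bS] at hpos
        · exact h
      refine ⟨n, hn0, ?_⟩
      rw [hSrel] at hpos
      nlinarith [hpos]
  rw [hAeq, (hmono.directed_le).measure_iUnion]
  apply iSup_le
  intro N
  have hhopf := hopf_ineq μ hcard hd hT hbal hφm hφint N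
  have hindrw : ∀ x, Set.indicator (B N) φ x
      = Set.indicator (B N) g x - Set.indicator (B N) (fun _ => c) x := by
    intro x
    by_cases hx : x ∈ B N <;> simp [hx, hφ]
  have hIeq : ∫ x, Set.indicator (B N) φ x ∂μ
      = (∫ x, Set.indicator (B N) g x ∂μ) - c * (μ (B N)).toReal := by
    rw [show (fun x => Set.indicator (B N) φ x)
        = fun x => Set.indicator (B N) g x - Set.indicator (B N) (fun _ => c) x by
      funext x; exact hindrw x]
    rw [integral_sub (hint.indicator (hBm N)) ((integrable_const c).indicator (hBm N)),
      integral_indicator_const c (hBm N)]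
    rw [smul_eq_mul, mul_comm]
    rfl
  have hIg : ∫ x, Set.indicator (B N) g x ∂μ ≤ ∫ x, g x ∂μ :=
    integral_mono (hint.indicator (hBm N)) hint
      (Set.indicator_le_self' (fun x _ => hg0 x))
  have hfin : (μ (B N)).toReal ≤ c⁻¹ * ∫ x, g x ∂μ := by
    rw [hIeq] at hhopf
    rw [le_inv_mul_iff₀ hc]
    linarith
  calc μ (B N) = ENNReal.ofReal (μ (B N)).toReal := (ENNReal.ofReal_toReal (measure_ne_top μ _)).symm
    _ ≤ ENNReal.ofReal (c⁻¹ * ∫ x, g x ∂μ) := ENNReal.ofReal_le_ofReal hfin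

end Maximal

open TopologicalSpace Set in
instance OnePoint.secondCountable_complex : SecondCountableTopology (OnePoint ℂ) := by
  set B : Set (Set ℂ) := countableBasis ℂ with hB
  set K : ℕ → Set (OnePoint ℂ) :=
    fun n => {OnePoint.infty} ∪ (fun z : ℂ => (z : OnePoint ℂ)) '' (Metric.closedBall (0:ℂ) n)ᶜ with hK
  have hKpre : ∀ n, (fun z : ℂ => (z : OnePoint ℂ)) ⁻¹' (K n) = (Metric.closedBall (0:ℂ) n)ᶜ := by
    intro n
    ext z
    simp [hK, OnePoint.coe_eq_coe, OnePoint.coe_ne_infty]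
  refine IsTopologicalBasis.secondCountableTopology (b :=
    ((fun s : Set ℂ => (fun z : ℂ => (z : OnePoint ℂ)) '' s) '' B) ∪ Set.range K) ?_ ?_
  · refine isTopologicalBasis_of_isOpen_of_nhds ?_ ?_
    · rintro u (⟨s, hs, rfl⟩ | ⟨n, rfl⟩)
      · exact OnePoint.isOpen_image_coe.2 ((isBasis_countableBasis ℂ).isOpen hs)
      · rw [OnePoint.isOpen_iff_of_mem (by simp [hK])]
        rw [hKpre n, compl_compl]
        exact ⟨Metric.isClosed_closedBall, isCompact_closedBall _ _⟩
    · rintro (z | z) u hau hu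
      · have hinf : OnePoint.infty ∈ u := hau
        have hcpt : IsCompact ((fun z : ℂ => (z : OnePoint ℂ)) ⁻¹' u)ᶜ :=
          ((OnePoint.isOpen_iff_of_mem hinf).1 hu).2
        obtain ⟨r, hr⟩ := hcpt.isBounded.subset_closedBall (0 : ℂ)
        obtain ⟨n, hn⟩ := exists_nat_ge r
        refine ⟨K n, Or.inr ⟨n, rfl⟩, Or.inl rfl, ?_⟩
        rintro x (hx | ⟨w, hw, rfl⟩)
        · simpa [show x = OnePoint.infty from hx] using hinf
        · by_contra hxu
          exact hw (Metric.closedBall_subset_closedBall hn (hr hxu))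
      · have hz : (z : OnePoint ℂ) ∈ u := hau
        have hopen : IsOpen ((fun z : ℂ => (z : OnePoint ℂ)) ⁻¹' u) :=
          hu.preimage OnePoint.continuous_coe
        obtain ⟨s, hsB, hzs, hsu⟩ :=
          (isBasis_countableBasis ℂ).exists_subset_of_mem_open hz hopen
        exact ⟨(fun z : ℂ => (z : OnePoint ℂ)) '' s, Or.inl ⟨s, hsB, rfl⟩,
          ⟨z, hzs, rfl⟩, (Set.image_mono hsu).trans (Set.image_preimage_subset _ _)⟩
  · exact ((countable_countableBasis ℂ).image _).union (Set.countable_range K)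

section Main

lemma birkhoff_main {X : Type*} [TopologicalSpace X] [NormalSpace X] [MeasurableSpace X] [BorelSpace X]
    {d : ℕ} {T : X → Multiset X} (hcard : ∀ x, Multiset.card (T x) = d) (hd : d ≠ 0)
    (hT : MeasCorr d T) (μ : Measure X) [IsProbabilityMeasure μ] [μ.WeaklyRegular]
    (hbal : UInvariant μ d T)
    (E : Set X) (hE : μ E = 0)
    (hequi : ∀ ψ : X → ℝ, Continuous ψ → ∀ x ∉ E,
      Tendsto (fun n : ℕ => (transfer d T)^[n] ψ x) atTop (𝓝 (∫ y, ψ y ∂μ)))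
    (φ : X → ℝ) (hm : Measurable φ) (hint : Integrable φ μ) :
    ∀ᵐ x ∂μ, Tendsto
      (fun n : ℕ => (1 / (n : ℝ)) * ∑ j ∈ Finset.range n, (transfer d T)^[j] φ x)
      atTop (𝓝 (∫ y, φ y ∂μ)) := by
  set I := ∫ y, φ y ∂μ with hI
  have key : ∀ c : ℝ, 0 < c →
      μ {x | ¬ ∀ᶠ n : ℕ in atTop,
        |(1/(n:ℝ)) * ∑ j ∈ Finset.range n, (transfer d T)^[j] φ x - I| ≤ 3*c} = 0 := by
    intro c hc
    set Bad := {x | ¬ ∀ᶠ n : ℕ in atTop,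
        |(1/(n:ℝ)) * ∑ j ∈ Finset.range n, (transfer d T)^[j] φ x - I| ≤ 3*c} with hBad
    have hBadle : ∀ δ : ℝ, 0 < δ → δ ≤ c → μ Bad ≤ ENNReal.ofReal (c⁻¹ * δ) := by
      intro δ hδ hδc
      obtain ⟨ψ, hψle, hψint⟩ := hint.exists_boundedContinuous_integral_sub_le (half_pos hδ)
      set g : X → ℝ := fun x => |φ x - ψ x| with hg
      have hgm : Measurable g := (hm.sub ψ.continuous.measurable).abs
      have hgint : Integrable g μ := (hint.sub hψint).abs
      have hg0 : ∀ x, 0 ≤ g x := fun x => abs_nonneg _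
      have hgI : ∫ x, g x ∂μ ≤ δ/2 := by
        simpa [Real.norm_eq_abs] using hψle
      have hgI0 : 0 ≤ ∫ x, g x ∂μ := integral_nonneg hg0
      set W := {x | ∃ n : ℕ, 0 < n ∧ c * n < ∑ j ∈ Finset.range n, (transfer d T)^[j] g x}
        with hW
      have hWle := maximal_ineq μ hcard hd hT hbal hgm hgint hg0 hc
      have hIψ : |(∫ y, ψ y ∂μ) - I| ≤ δ/2 := by
        have h1 : I - ∫ y, ψ y ∂μ = ∫ y, (φ y - ψ y) ∂μ := by
          rw [integral_sub hint hψint]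
        have h2 : |∫ y, (φ y - ψ y) ∂μ| ≤ ∫ y, |φ y - ψ y| ∂μ := by
          simpa [Real.norm_eq_abs] using
            norm_integral_le_integral_norm (f := fun y => φ y - ψ y) (μ := μ)
        rw [abs_sub_comm, h1]
        exact le_trans h2 hgI
      have hsub : Bad ⊆ W ∪ E := by
        intro x hx
        by_contra hxn
        simp only [Set.mem_union, not_or] at hxn
        obtain ⟨hxW, hxE⟩ := hxn
        have hxW' : ∀ n : ℕ, 0 < n →
            (∑ j ∈ Finset.range n, (transfer d T)^[j] g x) ≤ c * n := by
          intro n hn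
          by_contra hlt
          exact hxW ⟨n, hn, not_le.1 hlt⟩
        have hces : Tendsto (fun n : ℕ => ((n:ℝ)⁻¹) * ∑ i ∈ Finset.range n,
            (transfer d T)^[i] (⇑ψ) x) atTop (𝓝 (∫ y, ψ y ∂μ)) :=
          (hequi ψ ψ.continuous x hxE).cesaro
        have hev1 : ∀ᶠ n : ℕ in atTop, |((n:ℝ)⁻¹) * (∑ i ∈ Finset.range n,
            (transfer d T)^[i] (⇑ψ) x) - ∫ y, ψ y ∂μ| ≤ c := by
          have := hces (Metric.closedBall_mem_nhds (∫ y, ψ y ∂μ) hc)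
          filter_upwards [this] with n hn
          simpa [Metric.mem_closedBall, Real.dist_eq] using hn
        apply hx
        filter_upwards [hev1, eventually_ge_atTop 1] with n hn1 hn0
        have hnpos : (0:ℝ) < n := by exact_mod_cast hn0
        have habs : |(1/(n:ℝ)) * (∑ j ∈ Finset.range n, (transfer d T)^[j] φ x)
            - (1/(n:ℝ)) * ∑ j ∈ Finset.range n, (transfer d T)^[j] (⇑ψ) x| ≤ c := by
          rw [← mul_sub, ← Finset.sum_sub_distrib, abs_mul, abs_of_pos (by positivity)]
          have hstep : |∑ j ∈ Finset.range n,
              ((transfer d T)^[j] φ x - (transfer d T)^[j] (⇑ψ) x)|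
              ≤ ∑ j ∈ Finset.range n, (transfer d T)^[j] g x := by
            refine le_trans (Finset.abs_sum_le_sum_abs _ _) (Finset.sum_le_sum ?_)
            intro j _
            have h1 := transfer_iter_abs_le (d := d) (T := T) (fun y => φ y - ψ y) j x
            rw [congrFun (transfer_iter_sub (d := d) (T := T) φ (⇑ψ) j) x] at h1
            exact h1
          calc (1/(n:ℝ)) * |∑ j ∈ Finset.range n,
                ((transfer d T)^[j] φ x - (transfer d T)^[j] (⇑ψ) x)|
              ≤ (1/(n:ℝ)) * (c * n) := by
                refine mul_le_mul_of_nonneg_left (le_trans hstep (hxW' n ?_)) (by positivity)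
                omega
            _ = c := by field_simp
        have htri : |(1/(n:ℝ)) * ∑ j ∈ Finset.range n, (transfer d T)^[j] φ x - I|
            ≤ |(1/(n:ℝ)) * (∑ j ∈ Finset.range n, (transfer d T)^[j] φ x)
                - (1/(n:ℝ)) * ∑ j ∈ Finset.range n, (transfer d T)^[j] (⇑ψ) x|
              + |(1/(n:ℝ)) * (∑ j ∈ Finset.range n, (transfer d T)^[j] (⇑ψ) x)
                - ∫ y, ψ y ∂μ|
              + |(∫ y, ψ y ∂μ) - I| := by
          have t1 := abs_sub_le ((1/(n:ℝ)) * ∑ j ∈ Finset.range n, (transfer d T)^[j] φ x)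
            ((1/(n:ℝ)) * ∑ j ∈ Finset.range n, (transfer d T)^[j] (⇑ψ) x)
            I
          have t2 := abs_sub_le ((1/(n:ℝ)) * ∑ j ∈ Finset.range n, (transfer d T)^[j] (⇑ψ) x)
            (∫ y, ψ y ∂μ) I
          linarith
        have hn1' : |(1/(n:ℝ)) * (∑ i ∈ Finset.range n, (transfer d T)^[i] (⇑ψ) x)
            - ∫ y, ψ y ∂μ| ≤ c := by
          rw [one_div]
          exact hn1
        linarith [htri, habs, hn1', hIψ, hδc]
      calc μ Bad ≤ μ (W ∪ E) := measure_mono hsub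
        _ ≤ μ W + μ E := measure_union_le _ _
        _ = μ W := by rw [hE, add_zero]
        _ ≤ ENNReal.ofReal (c⁻¹ * ∫ x, g x ∂μ) := hWle
        _ ≤ ENNReal.ofReal (c⁻¹ * δ) := by
            apply ENNReal.ofReal_le_ofReal
            have : ∫ x, g x ∂μ ≤ δ := le_trans hgI (by linarith)
            exact mul_le_mul_of_nonneg_left this (inv_nonneg.2 hc.le)
    by_contra hne
    have hfin : μ Bad ≠ ⊤ := measure_ne_top μ _
    have htpos : 0 < (μ Bad).toReal := ENNReal.toReal_pos hne hfin
    set t := (μ Bad).toReal with ht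
    have hδpos : 0 < min c (c * t / 2) := lt_min hc (by positivity)
    have h2 := hBadle _ hδpos (min_le_left _ _)
    have h3 : μ Bad ≤ ENNReal.ofReal (t/2) := by
      refine le_trans h2 (ENNReal.ofReal_le_ofReal ?_)
      have hle : min c (c * t / 2) ≤ c * t / 2 := min_le_right _ _
      have : c⁻¹ * min c (c * t / 2) ≤ c⁻¹ * (c * t / 2) :=
        mul_le_mul_of_nonneg_left hle (inv_nonneg.2 hc.le)
      calc c⁻¹ * min c (c * t / 2) ≤ c⁻¹ * (c * t / 2) := this
        _ = t/2 := by field_simp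
    have h4 : ENNReal.ofReal (t/2) < μ Bad := by
      calc ENNReal.ofReal (t/2) < ENNReal.ofReal t := by
            rw [ENNReal.ofReal_lt_ofReal_iff htpos]; linarith
        _ = μ Bad := ENNReal.ofReal_toReal hfin
    exact absurd h3 (not_le.2 h4)
  have hae : ∀ᵐ x ∂μ, ∀ m : ℕ, ∀ᶠ n : ℕ in atTop,
      |(1/(n:ℝ)) * ∑ j ∈ Finset.range n, (transfer d T)^[j] φ x - I|
        ≤ 3 * (1/((m:ℝ)+1)) := by
    rw [ae_all_iff]
    intro m
    have h := key (1/((m:ℝ)+1)) (by positivity)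
    rw [ae_iff]
    exact h
  filter_upwards [hae] with x hx
  rw [Metric.tendsto_atTop]
  intro ε hε
  obtain ⟨m, hm⟩ := exists_nat_gt (3/ε)
  have hm1 : (0:ℝ) < (m:ℝ) + 1 := by positivity
  have h3 : 3 * (1/((m:ℝ)+1)) < ε := by
    rw [div_lt_iff₀ hε] at hm
    rw [mul_one_div, div_lt_iff₀ hm1]
    nlinarith
  obtain ⟨N, hN⟩ := Filter.eventually_atTop.1 (hx m)
  refine ⟨N, fun n hn => ?_⟩
  rw [Real.dist_eq]
  exact lt_of_le_of_lt (hN n hn) h3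

end Main

/-- **Ergodic theorem for the Brolin–Lyubich measure.** Let `f` be a rational
map of degree `d ≥ 2` on the Riemann sphere `OnePoint ℂ` (induced by coprime
polynomials `p, q` with `d = max(deg p, deg q)`), let `T(x)` be the multiset of
`f`-preimages of `x` counted with multiplicity, and let `μ_f` be the
Brolin–Lyubich measure, i.e. the balanced measure (`f*μ_f = d·μ_f`) for which
the preimages of every point outside a `μ_f`-null set equidistribute. Then for
every `φ ∈ L¹(μ_f)`, `(1/n) Σ_{j<n} (1/dʲ) Σ'_{y ∈ f⁻ʲ(x)} φ(y) → ∫ φ dμ_f`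
for `μ_f`-almost every `x`. -/
theorem rational_map_birkhoff
    [MeasurableSpace (OnePoint ℂ)] [BorelSpace (OnePoint ℂ)]
    (p q : Polynomial ℂ) (hpq : IsCoprime p q)
    (d : ℕ) (hdeg : d = max p.natDegree q.natDegree) (hd : 2 ≤ d)
    (f : OnePoint ℂ → OnePoint ℂ) (hfc : Continuous f)
    (hf : ∀ z : ℂ, Polynomial.eval z q ≠ 0 →
      f (z : OnePoint ℂ) = ((Polynomial.eval z p / Polynomial.eval z q : ℂ) : OnePoint ℂ))
    (T : OnePoint ℂ → Multiset (OnePoint ℂ))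
    (hcard : ∀ x, Multiset.card (T x) = d)
    (hpre : ∀ x, ∀ y ∈ T x, f y = x)
    (hTmeas : MeasCorr d T)
    (μf : Measure (OnePoint ℂ)) [IsProbabilityMeasure μf]
    (hbalanced : UInvariant μf d T)
    (hequi : ∃ E : Set (OnePoint ℂ), μf E = 0 ∧
      ∀ φ : OnePoint ℂ → ℝ, Continuous φ → ∀ x ∉ E,
        Filter.Tendsto (fun n : ℕ => (transfer d T)^[n] φ x)
          atTop (nhds (∫ y, φ y ∂μf)))
    (φ : OnePoint ℂ → ℝ) (hφ : Integrable φ μf) :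
    ∀ᵐ x ∂μf, Filter.Tendsto
      (fun n : ℕ => (1 / (n : ℝ)) * ∑ j ∈ Finset.range n, (transfer d T)^[j] φ x)
      atTop (nhds (∫ y, φ y ∂μf)) := by
  obtain ⟨E, hE, hequi⟩ := hequi
  have hd0 : d ≠ 0 := by omega
  obtain ⟨φ₀, hφ₀m, hφ₀e⟩ : ∃ φ₀, StronglyMeasurable φ₀ ∧ φ =ᵐ[μf] φ₀ :=
    ⟨hφ.1.mk φ, hφ.1.stronglyMeasurable_mk, hφ.1.ae_eq_mk⟩
  have hφ₀int : Integrable φ₀ μf := hφ.congr hφ₀e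
  have hmain := birkhoff_main hcard hd0 hTmeas μf hbalanced E hE hequi
    φ₀ hφ₀m.measurable hφ₀int
  have hh : Integrable (fun x => |φ x - φ₀ x|) μf := (hφ.sub hφ₀int).abs
  have hI0 : ∫ x, |φ x - φ₀ x| ∂μf = 0 := by
    have he : (fun x => |φ x - φ₀ x|) =ᵐ[μf] (fun _ => (0:ℝ)) := by
      filter_upwards [hφ₀e] with x hx
      simp [hx]
    rw [integral_congr_ae he, integral_zero]
  have hiter0 : ∀ j : ℕ,
      (fun x => (transfer d T)^[j] (fun y => |φ y - φ₀ y|) x) =ᵐ[μf] (fun _ => (0:ℝ)) := by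
    intro j
    have hnn : ∀ x, 0 ≤ (transfer d T)^[j] (fun y => |φ y - φ₀ y|) x :=
      transfer_iter_nonneg hcard hd0 (fun x => abs_nonneg _) j
    have hint' := transfer_iter_int hbalanced hh j
    have hz : ∫ x, (transfer d T)^[j] (fun y => |φ y - φ₀ y|) x ∂μf = 0 :=
      hint'.2.trans hI0
    exact (integral_eq_zero_iff_of_nonneg hnn hint'.1).1 hz
  have hae2 : ∀ᵐ x ∂μf, ∀ j : ℕ, (transfer d T)^[j] φ x = (transfer d T)^[j] φ₀ x := by
    rw [ae_all_iff]
    intro j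
    filter_upwards [hiter0 j] with x hx
    have h1 := transfer_iter_abs_le (d := d) (T := T) (fun y => φ y - φ₀ y) j x
    rw [congrFun (transfer_iter_sub (d := d) (T := T) φ φ₀ j) x] at h1
    have h2 : |(transfer d T)^[j] φ x - (transfer d T)^[j] φ₀ x| ≤ 0 :=
      le_trans h1 (le_of_eq hx)
    have := abs_nonneg ((transfer d T)^[j] φ x - (transfer d T)^[j] φ₀ x)
    have h3 : (transfer d T)^[j] φ x - (transfer d T)^[j] φ₀ x = 0 :=
      abs_eq_zero.1 (le_antisymm h2 this)
    linarith
  have hIeq : ∫ y, φ y ∂μf = ∫ y, φ₀ y ∂μf := integral_congr_ae hφ₀e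
  rw [hIeq]
  filter_upwards [hmain, hae2] with x hx1 hx2
  have hfun : (fun n : ℕ => (1/(n:ℝ)) * ∑ j ∈ Finset.range n, (transfer d T)^[j] φ x)
      = (fun n : ℕ => (1/(n:ℝ)) * ∑ j ∈ Finset.range n, (transfer d T)^[j] φ₀ x) := by
    funext n
    congr 1
    exact Finset.sum_congr rfl (fun j _ => hx2 j)
  rw [hfun]
  exact hx1
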